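/- arXiv:0802.0552 — 2 statements merged into one kernel-verified Lean document; each statement's English description precedes it below -/
import Mathlib

section
/- Let n > 0, 0 ≤ c < 1, Δ ≥ 0 and β > 0 be real numbers, and set q = β·√n / (1−c)^{Δ/2} (the quorum size of the algorithm). If a is a real number with q·(1−c)^Δ ≤ a ≤ n, then (1 − a/n)^q ≤ exp(−β²). In particular, a consultation that draws q nodes uniformly at random with replacement from n nodes misses a set of a ≥ q·(1−c)^Δ up-to-date nodes with probability at most e^{−β²}. -/
/-- With quorum size `q = β√n / (1-c)^(Δ/2)`, a consultation drawing `q` nodes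
uniformly at random with replacement among `n` nodes misses a set of
`a ≥ q·(1-c)^Δ` up-to-date nodes with probability `(1 - a/n) ^ q` at most
`exp (-β²)`. (Exponents are real powers.) -/
theorem consultation_miss_prob_le (n c Δ β q a : ℝ)
    (hn : 0 < n) (hc0 : 0 ≤ c) (hc1 : c < 1) (hΔ : 0 ≤ Δ) (hβ : 0 < β)
    (hq : q = β * Real.sqrt n / (1 - c) ^ (Δ / 2))
    (ha : q * (1 - c) ^ Δ ≤ a) (han : a ≤ n) :
    (1 - a / n) ^ q ≤ Real.exp (-β ^ 2) := by
  have h1c : (0:ℝ) < 1 - c := by linarith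
  have hd : 0 < (1 - c) ^ Δ := Real.rpow_pos_of_pos h1c Δ
  have ht : 0 < (1 - c) ^ (Δ / 2) := Real.rpow_pos_of_pos h1c (Δ / 2)
  have hs : Real.sqrt n * Real.sqrt n = n := Real.mul_self_sqrt hn.le
  have hq0 : 0 < q := by rw [hq]; positivity
  have hhalf : (1 - c) ^ (Δ / 2) * (1 - c) ^ (Δ / 2) = (1 - c) ^ Δ := by
    rw [← Real.rpow_add h1c]; ring_nf
  have key : q * (1 - c) ^ Δ * q = β ^ 2 * n := by
    have hqt : q * (1 - c) ^ (Δ / 2) = β * Real.sqrt n := by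
      rw [hq]; field_simp
    calc q * (1 - c) ^ Δ * q
        = (q * (1 - c) ^ (Δ / 2)) * (q * (1 - c) ^ (Δ / 2)) := by rw [← hhalf]; ring
      _ = β ^ 2 * n := by rw [hqt]; linear_combination β ^ 2 * hs
  have hfrac : 0 ≤ 1 - a / n := by
    rw [sub_nonneg]
    exact (div_le_one hn).mpr han
  have step1 : (1 - a / n) ^ q ≤ Real.exp (-(a / n)) ^ q :=
    Real.rpow_le_rpow hfrac (by linarith [Real.add_one_le_exp (-(a / n))]) hq0.le
  have step2 : Real.exp (-(a / n)) ^ q = Real.exp (-(a / n) * q) :=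
    (Real.exp_mul _ _).symm
  have hkey2 : β ^ 2 ≤ a / n * q := by
    rw [div_mul_eq_mul_div, le_div_iff₀ hn]
    nlinarith [mul_le_mul_of_nonneg_right ha hq0.le]
  calc (1 - a / n) ^ q ≤ Real.exp (-(a / n) * q) := step2 ▸ step1
    _ ≤ Real.exp (-β ^ 2) := Real.exp_le_exp.mpr (by nlinarith)
end

section
/- Let n > 0, 0 ≤ c < 1, Δ ≥ 0 and β > 0 be real numbers, set q = β·√n / (1−c)^{Δ/2}, and suppose q·(1−c)^Δ ≤ n. Let S be a finite set of n nodes and A ⊆ S a subset with |A| ≥ q·(1−c)^Δ. If q nodes are drawn independently and uniformly at random from S, then with probability at least 1 − e^{−β²} at least one drawn node lies in A. (Hence any consultation phase of the algorithm returns an up-to-date value with high probability.) -/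
open MeasureTheory

/-- Consultation succeeds with high probability: with quorum size
`q = β√n / (1-c)^(Δ/2)` and a set `A ⊆ S` of up-to-date nodes of cardinality
at least `q·(1-c)^Δ` in a system `S` of `n` nodes, drawing `q` nodes
independently and uniformly at random from `S` hits `A` with probability at
least `1 - exp (-β²)`. -/
theorem consultation_succeeds_whp {α : Type*} [MeasurableSpace α]
    [MeasurableSingletonClass α]
    (n : ℕ) (hn : 0 < n) (c Δ β : ℝ)
    (hc0 : 0 ≤ c) (hc1 : c < 1) (hΔ : 0 ≤ Δ) (hβ : 0 < β)
    (q : ℕ) (hq : (q : ℝ) = β * Real.sqrt n / (1 - c) ^ (Δ / 2))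
    (hqn : (q : ℝ) * (1 - c) ^ Δ ≤ n)
    (S A : Finset α) (hA : A ⊆ S) (hS : S.card = n) (hSne : S.Nonempty)
    (hAcard : (q : ℝ) * (1 - c) ^ Δ ≤ (A.card : ℝ)) :
    (Measure.pi fun _ : Fin q => (PMF.uniformOfFinset S hSne).toMeasure)
        {f | ∃ i, f i ∈ A}
      ≥ ENNReal.ofReal (1 - Real.exp (-β ^ 2)) := by
  classical
  have h1c : (0:ℝ) < 1 - c := by linarith
  set a := A.card with ha
  have han : a ≤ n := hS ▸ Finset.card_le_card hA
  have hA_meas : MeasurableSet (↑A : Set α) := A.finite_toSet.measurableSet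
  set ν := (PMF.uniformOfFinset S hSne).toMeasure with hν
  set μ := Measure.pi fun _ : Fin q => ν with hμ
  have hprob : IsProbabilityMeasure μ := inferInstance
  have hpi_meas : MeasurableSet (Set.pi Set.univ fun _ : Fin q => (↑A : Set α)ᶜ) :=
    MeasurableSet.pi Set.countable_univ fun _ _ => hA_meas.compl
  have hset : {f : Fin q → α | ∃ i, f i ∈ A}
      = (Set.pi Set.univ fun _ : Fin q => (↑A : Set α)ᶜ)ᶜ := by
    ext f; simp [Set.mem_pi]
  -- compute the measure of the complement
  have hνA : ν ((↑A : Set α)ᶜ) = ((n - a : ℕ) : ENNReal) / n := by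
    have hcard : ∀ (inst : DecidablePred (fun x => x ∈ ((↑A : Set α)ᶜ))),
        (S.filter (fun x => x ∈ ((↑A : Set α)ᶜ))).card = n - a := by
      intro inst
      have hfilt : S.filter (fun x => x ∈ ((↑A : Set α)ᶜ)) = S \ A := by
        ext x; simp
      rw [hfilt, Finset.card_sdiff_of_subset hA, hS]
    rw [hν, PMF.toMeasure_uniformOfFinset_apply hSne _ hA_meas.compl, hcard _, hS]
  have hpi : μ (Set.pi Set.univ fun _ : Fin q => (↑A : Set α)ᶜ)
      = (((n - a : ℕ) : ENNReal) / n) ^ q := by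
    rw [hμ, Measure.pi_pi]
    simp [hνA]
  -- real-number bound on the miss probability
  set t : ℝ := (1 - c) ^ (Δ / 2) with hts
  have ht : 0 < t := Real.rpow_pos_of_pos h1c _
  have ht2 : t * t = (1 - c) ^ Δ := by
    rw [hts, ← Real.rpow_add h1c]
    norm_num
  have hqt : (q : ℝ) * t = β * Real.sqrt n := by
    rw [hq]; field_simp
  have hkey : β ^ 2 * n ≤ (q : ℝ) * a := by
    have h1 : (q : ℝ) * ((q : ℝ) * (1 - c) ^ Δ) ≤ (q : ℝ) * a :=
      mul_le_mul_of_nonneg_left hAcard (Nat.cast_nonneg q)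
    have h2 : (q : ℝ) * ((q : ℝ) * (1 - c) ^ Δ) = ((q : ℝ) * t) * ((q : ℝ) * t) := by
      rw [← ht2]; ring
    have h3 : ((q : ℝ) * t) * ((q : ℝ) * t) = β ^ 2 * n := by
      rw [hqt]
      have : Real.sqrt n * Real.sqrt n = (n : ℝ) :=
        Real.mul_self_sqrt (Nat.cast_nonneg n)
      nlinarith [this]
    calc β ^ 2 * n = (q : ℝ) * ((q : ℝ) * (1 - c) ^ Δ) := by rw [h2, h3]
      _ ≤ (q : ℝ) * a := h1
  have hnpos : (0:ℝ) < n := Nat.cast_pos.mpr hn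
  have hreal : (((n - a : ℕ) : ℝ) / n) ^ q ≤ Real.exp (-β ^ 2) := by
    have hcast : ((n - a : ℕ) : ℝ) = (n : ℝ) - a := by
      exact Nat.cast_sub han
    have hr0 : (0:ℝ) ≤ ((n - a : ℕ) : ℝ) / n :=
      div_nonneg (Nat.cast_nonneg _) hnpos.le
    have hstep : ((n - a : ℕ) : ℝ) / n ≤ Real.exp (-(a / n)) := by
      rw [hcast]
      have := Real.add_one_le_exp (-(a / (n:ℝ)))
      have h' : ((n:ℝ) - a) / n = 1 - a / n := by field_simp
      rw [h']; linarith
    calc (((n - a : ℕ) : ℝ) / n) ^ q ≤ Real.exp (-(a / n)) ^ q :=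
          pow_le_pow_left₀ hr0 hstep q
      _ = Real.exp ((q : ℝ) * -(a / n)) := by
          rw [← Real.exp_nat_mul]
      _ ≤ Real.exp (-β ^ 2) := by
          apply Real.exp_le_exp.mpr
          have h' : (q : ℝ) * -(↑a / ↑n) = -((q : ℝ) * a / n) := by ring
          rw [h', neg_le_neg_iff, le_div_iff₀ hnpos]
          linarith [hkey]
  -- transfer to ENNReal
  have hmiss : μ (Set.pi Set.univ fun _ : Fin q => (↑A : Set α)ᶜ)
      ≤ ENNReal.ofReal (Real.exp (-β ^ 2)) := by
    rw [hpi]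
    have : ((n - a : ℕ) : ENNReal) / n = ENNReal.ofReal (((n - a : ℕ) : ℝ) / n) := by
      rw [ENNReal.ofReal_div_of_pos hnpos]
      simp
    rw [this, ← ENNReal.ofReal_pow (div_nonneg (Nat.cast_nonneg _) hnpos.le)]
    exact ENNReal.ofReal_le_ofReal hreal
  rw [hset, prob_compl_eq_one_sub hpi_meas]
  rw [ENNReal.ofReal_sub _ (Real.exp_nonneg _), ENNReal.ofReal_one]
  exact tsub_le_tsub_left hmiss 1
end
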